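/- arXiv:2602.09863 — 4 statements merged into one kernel-verified Lean document; each statement's English description precedes it below -/
import Mathlib

section
/- As n → ∞, both ω⃗(A_n) → ∞ and ω⃗(D_n) → ∞; that is, for every k there exists N such that for all n ≥ N we have ω⃗(A_n) ≥ k and ω⃗(D_n) ≥ k. -/
/-- A tournament on a vertex type `V`: an orientation of the complete graph. -/
structure Tournament (V : Type) where
  arc : V → V → Prop
  loopless : ∀ v, ¬ arc v v
  anti : ∀ u v, u ≠ v → (arc u v ↔ ¬ arc v u)

namespace Tournament

variable {V W : Type}

/-- The backedge graph of `T` with respect to the total ordering of `V` induced by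
an injective map `f : V → ℕ`: `u` and `v` are adjacent iff the arc between them
goes backwards in the ordering. -/
def backedge (T : Tournament V) (f : V → ℕ) : SimpleGraph V where
  Adj u v := (f u < f v ∧ T.arc v u) ∨ (f v < f u ∧ T.arc u v)
  symm := ⟨fun u v h => h.symm⟩
  loopless := ⟨by
    intro v h
    rcases h with ⟨h, _⟩ | ⟨h, _⟩ <;> exact lt_irrefl _ h⟩

/-- The clique number of a tournament: the minimum over all orderings of the
clique number of the corresponding backedge graph. -/
noncomputable def cliqueNum (T : Tournament V) : ℕ :=
  sInf {n | ∃ f : V → ℕ, Function.Injective f ∧ (T.backedge f).cliqueNum = n}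

/-- The subtournament induced on a set `X` of vertices. -/
def restrict (T : Tournament V) (X : Set V) : Tournament X where
  arc u v := T.arc u.1 v.1
  loopless v := T.loopless v.1
  anti u v h := T.anti u.1 v.1 (fun e => h (Subtype.ext e))

/-- `ω⃗(X)`: the clique number of the subtournament induced on `X`. -/
noncomputable def cliqueNumOn (T : Tournament V) (X : Set V) : ℕ :=
  (T.restrict X).cliqueNum

/-- Out-neighbourhood. -/
def outN (T : Tournament V) (v : V) : Set V := {w | T.arc v w}

/-- In-neighbourhood. -/
def inN (T : Tournament V) (v : V) : Set V := {w | T.arc w v}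

/-- `T.HasCopy H`: some set of vertices of `T` induces a subtournament isomorphic to `H`. -/
def HasCopy (T : Tournament V) (H : Tournament W) : Prop :=
  ∃ f : W → V, Function.Injective f ∧ ∀ u v : W, H.arc u v ↔ T.arc (f u) (f v)

end Tournament

/-- Vertex type of the tournament `D n` (`D 0` is empty, `D 1` a single vertex). -/
def DType : ℕ → Type
  | 0 => Empty
  | n+1 => (DType n) ⊕ ((DType n) ⊕ Unit)

/-- Arcs of `D n`: `D (n+1) = Δ(X, Y, v)` with `X ⇒ Y`, `Y ⇒ v`, `v ⇒ X`,
where `X`, `Y` are copies of `D n` and `v` one extra vertex. -/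
def Darc : (n : ℕ) → DType n → DType n → Prop
  | 0, x, _ => x.elim
  | n+1, Sum.inl a, Sum.inl b => Darc n a b
  | _+1, Sum.inl _, Sum.inr (Sum.inl _) => True
  | _+1, Sum.inl _, Sum.inr (Sum.inr _) => False
  | _+1, Sum.inr (Sum.inl _), Sum.inl _ => False
  | n+1, Sum.inr (Sum.inl a), Sum.inr (Sum.inl b) => Darc n a b
  | _+1, Sum.inr (Sum.inl _), Sum.inr (Sum.inr _) => True
  | _+1, Sum.inr (Sum.inr _), Sum.inl _ => True
  | _+1, Sum.inr (Sum.inr _), Sum.inr _ => False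

theorem Darc_irrefl (n : ℕ) : ∀ x : DType n, ¬ Darc n x x := by
  induction n with
  | zero => intro x; exact x.elim
  | succ n ih =>
    intro x
    match x with
    | Sum.inl a => simpa [Darc] using ih a
    | Sum.inr (Sum.inl a) => simpa [Darc] using ih a
    | Sum.inr (Sum.inr u) => simp [Darc]

theorem Darc_anti (n : ℕ) : ∀ x y : DType n, x ≠ y → (Darc n x y ↔ ¬ Darc n y x) := by
  induction n with
  | zero => intro x; exact x.elim
  | succ n ih =>
    intro x y hxy
    match x, y with
    | Sum.inl a, Sum.inl b =>
      have hab : a ≠ b := by intro h; exact hxy (by rw [h])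
      simpa [Darc] using ih a b hab
    | Sum.inl a, Sum.inr (Sum.inl b) => simp [Darc]
    | Sum.inl a, Sum.inr (Sum.inr u) => simp [Darc]
    | Sum.inr (Sum.inl a), Sum.inl b => simp [Darc]
    | Sum.inr (Sum.inl a), Sum.inr (Sum.inl b) =>
      have hab : a ≠ b := by intro h; exact hxy (by rw [h])
      simpa [Darc] using ih a b hab
    | Sum.inr (Sum.inl a), Sum.inr (Sum.inr u) => simp [Darc]
    | Sum.inr (Sum.inr u), Sum.inl b => simp [Darc]
    | Sum.inr (Sum.inr u), Sum.inr (Sum.inl b) => simp [Darc]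
    | Sum.inr (Sum.inr u), Sum.inr (Sum.inr w) =>
      exact absurd (by cases u; cases w; rfl) hxy

/-- The tournament `D n` (indexed so that `D 1` is a single vertex, and
`D (n+1)` is `Δ(D n, D n, v)`). -/
def Dtour (n : ℕ) : Tournament (DType n) where
  arc := Darc n
  loopless := Darc_irrefl n
  anti := Darc_anti n

/-- Vertex type of the tournament `A n` (`A 0` is empty, `A 1` a single vertex):
`A (n+1)` consists of `n` copies of `A n` together with `n+1` extra vertices. -/
def AType : ℕ → Type
  | 0 => Empty
  | n+1 => (Fin n × AType n) ⊕ Fin (n+1)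

/-- Arcs of `A (n+1)` (0-indexed version of the definition of Kim and Kim):
`inl (i, a)` is the vertex `a` of the copy `T_i` of `A n`, and `inr i` is the
extra vertex `v_i`.  We have `v_j ⇒ v_i` for `i < j`; `T_i ⇒ T_j` for `i < j`;
`v_i ⇒ T_j` for `i ≤ j`; and `T_j ⇒ v_i` for `j < i`. -/
def Aarc : (n : ℕ) → AType n → AType n → Prop
  | 0, x, _ => x.elim
  | n+1, Sum.inl (i, a), Sum.inl (j, b) => (i : ℕ) < (j : ℕ) ∨ (i = j ∧ Aarc n a b)
  | _+1, Sum.inl (j, _), Sum.inr i => (j : ℕ) < (i : ℕ)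
  | _+1, Sum.inr i, Sum.inl (j, _) => (i : ℕ) ≤ (j : ℕ)
  | _+1, Sum.inr i, Sum.inr j => (j : ℕ) < (i : ℕ)

theorem Aarc_irrefl (n : ℕ) : ∀ x : AType n, ¬ Aarc n x x := by
  induction n with
  | zero => intro x; exact x.elim
  | succ n ih =>
    intro x
    match x with
    | Sum.inl (i, a) =>
      simp only [Aarc, lt_irrefl, false_or, not_and]
      intro _
      exact ih a
    | Sum.inr i => simp [Aarc]

theorem Aarc_anti (n : ℕ) : ∀ x y : AType n, x ≠ y → (Aarc n x y ↔ ¬ Aarc n y x) := by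
  induction n with
  | zero => intro x; exact x.elim
  | succ n ih =>
    intro x y hxy
    match x, y with
    | Sum.inl (i, a), Sum.inl (j, b) =>
      rcases lt_trichotomy (i : ℕ) (j : ℕ) with h | h | h
      · have hne : j ≠ i := by intro e; rw [e] at h; exact lt_irrefl _ h
        simp only [Aarc]
        constructor
        · intro _ hc
          rcases hc with hc | ⟨hc, _⟩
          · omega
          · exact hne hc
        · intro _; exact Or.inl h
      · have hij : i = j := Fin.ext h
        subst hij
        have hab : a ≠ b := by
          intro e; exact hxy (by rw [e])
        simpa [Aarc] using ih a b hab
      · have hne : i ≠ j := by intro e; rw [e] at h; exact lt_irrefl _ h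
        simp only [Aarc]
        constructor
        · intro hc _
          rcases hc with hc | ⟨hc, _⟩
          · omega
          · exact hne hc
        · intro hc
          exfalso
          exact hc (Or.inl h)
    | Sum.inl (j, a), Sum.inr i => simp only [Aarc]; omega
    | Sum.inr i, Sum.inl (j, a) => simp only [Aarc]; omega
    | Sum.inr i, Sum.inr j =>
      have hne : (i : ℕ) ≠ (j : ℕ) := fun e => hxy (by rw [Fin.ext e])
      simp only [Aarc]
      omega

/-- The tournament `A n` of Kim and Kim (indexed so that `A 1` is a single vertex). -/
def Atour (n : ℕ) : Tournament (AType n) where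
  arc := Aarc n
  loopless := Aarc_irrefl n
  anti := Aarc_anti n
namespace Tournament

variable {V : Type}

/-- `M` contains a set `K` of `s` vertices such that every arc of `T[K]` is heavy,
as witnessed by a mountain (in the sense of the predicate `mtn`) inside `M`. -/
def HasHeavyClique (T : Tournament V) (mtn : Set V → Prop) (s : ℕ) (M : Set V) : Prop :=
  ∃ K ⊆ M, K.ncard = s ∧ ∀ u ∈ K, ∀ v ∈ K, T.arc u v →
    ∃ M' ⊆ M, mtn M' ∧ (∀ m ∈ M', T.arc m u) ∧ (∀ m ∈ M', T.arc v m)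

/-- `M` is minimal subject to containing an `(r,s)`-clique (heaviness being
witnessed by `r`-mountains, given by the predicate `mtn`, inside `M`). -/
def IsRSMtnAux (T : Tournament V) (mtn : Set V → Prop) (s : ℕ) (M : Set V) : Prop :=
  T.HasHeavyClique mtn s M ∧ ∀ M' ⊆ M, T.HasHeavyClique mtn s M' → M' = M

/-- `T.IsMtn r M`: the set `M` induces an `r`-mountain.  A `1`-mountain is a single
vertex, and an `(r+1)`-mountain (for `r ≥ 1`) is an `(r, r+1)`-mountain, i.e. a minimal
set containing `r+1` vertices all of whose arcs are `r`-heavy within the set. -/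
def IsMtn (T : Tournament V) : ℕ → Set V → Prop
  | 0 => fun _ => False
  | 1 => fun M => ∃ v, M = {v}
  | (r+2) => T.IsRSMtnAux (T.IsMtn (r+1)) (r+2)

/-- `T.IsRSMtn r s M`: the set `M` induces an `(r,s)`-mountain, i.e. a minimal set
containing an `(r,s)`-clique (with heaviness witnessed by `r`-mountains inside the set). -/
def IsRSMtn (T : Tournament V) (r s : ℕ) (M : Set V) : Prop :=
  T.IsRSMtnAux (T.IsMtn r) s M

/-- A `(c,a)`-ω⃗-bag-chain: pairwise disjoint bags of clique number exactly `c`,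
with all "wrong direction" neighbourhoods between bags of clique number less than `a`. -/
def IsBagChain (T : Tournament V) (c a : ℕ) {t : ℕ} (B : Fin t → Set V) : Prop :=
  (∀ i j : Fin t, i ≠ j → Disjoint (B i) (B j)) ∧
  (∀ i, T.cliqueNumOn (B i) = c) ∧
  (∀ i j : Fin t, i < j →
    (∀ v ∈ B j, T.cliqueNumOn (T.outN v ∩ B i) < a) ∧
    (∀ w ∈ B i, T.cliqueNumOn (T.inN w ∩ B j) < a))

/-- A `(c,a)`-near-bag-chain: pairwise disjoint bags of clique number at most `c`,
such that for every vertex the "wrong direction" neighbours in the union of the other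
bags have clique number at most `a`. -/
def IsNearBagChain (T : Tournament V) (c a : ℕ) {t : ℕ} (Q : Fin t → Set V) : Prop :=
  (∀ i j : Fin t, i ≠ j → Disjoint (Q i) (Q j)) ∧
  (∀ i, T.cliqueNumOn (Q i) ≤ c) ∧
  (∀ i : Fin t, ∀ v ∈ Q i,
    T.cliqueNumOn (T.inN v ∩ ⋃ j, ⋃ (_ : i < j), Q j) ≤ a ∧
    T.cliqueNumOn (T.outN v ∩ ⋃ j, ⋃ (_ : j < i), Q j) ≤ a)

end Tournament

/-- The Ramsey number `R(x,y)`: the least `N` such that every graph on `N` vertices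
contains a clique of size `x` or an independent set of size `y` (equivalently, every
red/blue colouring of the edges of `K_N` contains a red `K_x` or a blue `K_y`). -/
noncomputable def ramseyNumber (x y : ℕ) : ℕ :=
  sInf {N | ∀ G : SimpleGraph (Fin N),
    (∃ s, G.IsNClique x s) ∨ (∃ s, Gᶜ.IsNClique y s)}


/-! Fix an ordering `f` of the vertices and cut it into consecutive windows, the level sets of
`w ∘ f` for a monotone `w`, and let `b j` bound the backedge cliques inside window `j`. We show
by induction that `A n` and `D n` force `n ≤ 1 + ∑ j, (2 ^ b j - 1)`; with a single window this
gives `n ≤ 2 ^ ω(B(T, f))`.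

For the induction step pick a vertex `u`, split its window at `u`, and restrict to a copy of the
previous tournament which, on either side of `u` inside that window, is completely joined in the
backedge graph to some vertex of the window. Then both halves carry the bound `b - 1`, and the
potential strictly drops since `2 (2 ^ (b - 1) - 1) < 2 ^ b - 1`. In `D (n + 1) = Δ(X, Y, v)` one
descends into `Y` if some vertex of `X` follows `v` in its window, and into `X` otherwise. In
`A (n + 1)` one descends into `T_k` if some `v_k'` with `k < k'` precedes `v_k` in the same
window; if there is no such pair, the vertices `v_i` of each window form a backedge clique,
which already gives `n + 1 ≤ ∑ j, b j`. -/

open Finset Function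

def windowPotential (R : ℕ) (b : ℕ → ℕ) : ℕ :=
  ∑ j ∈ range R, (2 ^ b j - 1)

/-- Window `w c` is split at position `c`: window `q` becomes window `2 q`, except that the
positions of window `w c` after `c` go to window `2 (w c) + 1`. -/
def splitWindow (w : ℕ → ℕ) (c : ℕ) (t : ℕ) : ℕ :=
  2 * w t + if w t = w c ∧ c < t then 1 else 0

def splitBound (b : ℕ → ℕ) (p : ℕ) (j : ℕ) : ℕ :=
  if j / 2 = p then b p - 1 else if j % 2 = 0 then b (j / 2) else 0

theorem splitWindow_monotone {w : ℕ → ℕ} (hw : Monotone w) (c : ℕ) :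
    Monotone (splitWindow w c) := by
  intro s t hst
  have := hw hst
  unfold splitWindow
  split_ifs <;> omega

theorem splitWindow_div_two (w : ℕ → ℕ) (c t : ℕ) : splitWindow w c t / 2 = w t := by
  unfold splitWindow
  split_ifs <;> omega

theorem splitWindow_lt_two_mul {w : ℕ → ℕ} {R t : ℕ} (c : ℕ) (ht : w t < R) :
    splitWindow w c t < 2 * R := by
  unfold splitWindow
  split_ifs <;> omega

theorem sum_range_two_mul (g : ℕ → ℕ) (R : ℕ) :
    ∑ j ∈ range (2 * R), g j = ∑ q ∈ range R, (g (2 * q) + g (2 * q + 1)) := by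
  induction R with
  | zero => simp
  | succ R ih =>
    rw [show 2 * (R + 1) = 2 * R + 1 + 1 by ring, sum_range_succ, sum_range_succ,
      sum_range_succ, ih, add_assoc]

theorem windowPotential_splitBound_lt {R p : ℕ} {b : ℕ → ℕ} (hp : p < R) (hbp : 1 ≤ b p) :
    windowPotential (2 * R) (splitBound b p) < windowPotential R b := by
  have hpair : ∀ q, (2 ^ splitBound b p (2 * q) - 1) + (2 ^ splitBound b p (2 * q + 1) - 1) =
      if q = p then 2 * (2 ^ (b p - 1) - 1) else 2 ^ b q - 1 := by
    intro q
    simp only [splitBound, show 2 * q / 2 = q by omega, show (2 * q + 1) / 2 = q by omega,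
      Nat.mul_mod_right, show (2 * q + 1) % 2 = 1 by omega, if_true, one_ne_zero, if_false]
    split_ifs <;> simp [two_mul]
  have hhalf : 2 * (2 ^ (b p - 1) - 1) < 2 ^ b p - 1 := by
    have := Nat.two_pow_pred_mul_two hbp
    have := Nat.one_le_two_pow (n := b p - 1)
    omega
  unfold windowPotential
  rw [sum_range_two_mul]
  refine sum_lt_sum (fun q _ => ?_) ⟨p, mem_range.mpr hp, by rw [hpair, if_pos rfl]; exact hhalf⟩
  rw [hpair]
  split_ifs with hq
  · exact hq ▸ hhalf.le
  · exact le_rfl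

namespace Tournament

variable {V W : Type}

def WindowCliqueBound (T : Tournament V) (f : V → ℕ) (w b : ℕ → ℕ) : Prop :=
  ∀ j (K : Finset V), (∀ x ∈ K, w (f x) = j) → (T.backedge f).IsClique (K : Set V) → #K ≤ b j

def ForcesPotential (T : Tournament V) (n : ℕ) : Prop :=
  ∀ f : V → ℕ, Injective f → ∀ w : ℕ → ℕ, Monotone w → ∀ R : ℕ, (∀ x, w (f x) < R) →
    ∀ b : ℕ → ℕ, T.WindowCliqueBound f w b → n ≤ 1 + windowPotential R b

theorem forcesPotential_zero (T : Tournament V) : T.ForcesPotential 0 :=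
  fun _ _ _ _ _ _ _ _ => Nat.zero_le _

theorem backedge_adj_of_lt {T : Tournament V} {f : V → ℕ} {u v : V} (hlt : f u < f v)
    (harc : T.arc v u) : (T.backedge f).Adj u v :=
  Or.inl ⟨hlt, harc⟩

theorem backedge_adj_map {S : Tournament W} {T : Tournament V} {e : W → V}
    (harc : ∀ a c, S.arc a c → T.arc (e a) (e c)) {f : V → ℕ} {a c : W}
    (h : (S.backedge (f ∘ e)).Adj a c) : (T.backedge f).Adj (e a) (e c) :=
  h.imp (And.imp_right (harc _ _)) (And.imp_right (harc _ _))

section WindowCliqueBound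

variable {T : Tournament V} {f : V → ℕ} {w b : ℕ → ℕ}

theorem WindowCliqueBound.one_le (hb : T.WindowCliqueBound f w b) (u : V) : 1 ≤ b (w (f u)) := by
  simpa using hb _ {u} (by simp) (by simp)

theorem WindowCliqueBound.card_le_sub_one (hb : T.WindowCliqueBound f w b) {K : Finset V}
    {u : V} (hK : ∀ x ∈ K, w (f x) = w (f u)) (hcl : (T.backedge f).IsClique (K : Set V))
    (hu : ∀ x ∈ K, (T.backedge f).Adj u x) : #K ≤ b (w (f u)) - 1 := by
  classical
  have hnot : u ∉ K := fun h => (T.backedge f).loopless.irrefl u (hu u h)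
  have hins := hb _ (insert u K) (by simpa using ⟨rfl, hK⟩)
    (by rw [coe_insert]; exact hcl.insert fun x hx _ => hu x hx)
  rw [card_insert_of_notMem hnot] at hins
  omega

theorem WindowCliqueBound.card_le_windowPotential (hb : T.WindowCliqueBound f w b) {R : ℕ}
    (hR : ∀ x, w (f x) < R) {s : Finset V}
    (hs : ∀ x ∈ s, ∀ y ∈ s, x ≠ y → w (f x) = w (f y) → (T.backedge f).Adj x y) :
    #s ≤ windowPotential R b := by
  classical
  rw [card_eq_sum_card_fiberwise (f := fun x => w (f x)) (t := range R)
    fun x _ => mem_range.mpr (hR x)]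
  refine sum_le_sum fun j _ => (hb j _ (fun x hx => (mem_filter.mp hx).2) ?_).trans ?_
  · intro x hx y hy hxy
    simp only [coe_filter, Set.mem_ofPred_eq] at hx hy
    exact hs x hx.1 y hy.1 hxy (hx.2.trans hy.2.symm)
  · have := Nat.lt_two_pow_self (n := b j)
    omega

theorem WindowCliqueBound.comp_splitWindow (hb : T.WindowCliqueBound f w b) {S : Tournament W}
    {e : W → V} (he : Injective e) (harc : ∀ a c, S.arc a c → T.arc (e a) (e c)) {u u₀ u₁ : V}
    (hu : ∀ a, f (e a) ≠ f u) (hu₀ : w (f u₀) = w (f u)) (hu₁ : w (f u₁) = w (f u))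
    (h₀ : ∀ a, w (f (e a)) = w (f u) → f (e a) < f u → (T.backedge f).Adj u₀ (e a))
    (h₁ : ∀ a, w (f (e a)) = w (f u) → f u < f (e a) → (T.backedge f).Adj u₁ (e a)) :
    S.WindowCliqueBound (f ∘ e) (splitWindow w (f u)) (splitBound b (w (f u))) := by
  intro j K hK hcl
  set KV := K.map ⟨e, he⟩
  have hKV : (T.backedge f).IsClique (KV : Set V) := by
    rw [coe_map]
    rintro _ ⟨a, ha, rfl⟩ _ ⟨c, hc, rfl⟩ hne
    exact backedge_adj_map harc (hcl ha hc (ne_of_apply_ne e hne))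
  have hwin : ∀ a ∈ K, w (f (e a)) = j / 2 := fun a ha => by
    rw [← hK a ha, comp_apply, splitWindow_div_two]
  have hbit : ∀ a ∈ K, (j % 2 = 1 ↔ w (f (e a)) = w (f u) ∧ f u < f (e a)) := fun a ha => by
    have := hK a ha
    simp only [comp_apply, splitWindow] at this
    split_ifs at this with h
    · exact ⟨fun _ => h, fun _ => by omega⟩
    · exact ⟨fun _ => by omega, fun h' => absurd h' h⟩
  have hcard : #K = #KV := (card_map _).symm
  have hjoined : ∀ u' : V, w (f u') = w (f u) → (∀ a ∈ K, (T.backedge f).Adj u' (e a)) →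
      j / 2 = w (f u) → #K ≤ b (w (f u)) - 1 := by
    intro u' hu' hadj hp
    rw [hcard, ← hu']
    refine hb.card_le_sub_one ?_ hKV ?_ <;> intro x hx <;> obtain ⟨a, ha, rfl⟩ := mem_map.mp hx
    · exact (hwin a ha).trans (hp.trans hu'.symm)
    · exact hadj a ha
  unfold splitBound
  split_ifs with hp hj
  · rcases Nat.mod_two_eq_zero_or_one j with hj | hj
    · refine hjoined u₀ hu₀ (fun a ha => h₀ a ((hwin a ha).trans hp) ?_) hp
      have hle : ¬ f u < f (e a) := fun h => by
        have := (hbit a ha).mpr ⟨(hwin a ha).trans hp, h⟩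
        omega
      exact lt_of_le_of_ne (not_lt.mp hle) (hu a)
    · exact hjoined u₁ hu₁ (fun a ha => h₁ a ((hbit a ha).mp hj).1 ((hbit a ha).mp hj).2) hp
  · rw [hcard]
    exact hb _ KV (fun x hx => by obtain ⟨a, ha, rfl⟩ := mem_map.mp hx; exact hwin a ha) hKV
  · have : K = ∅ := eq_empty_of_forall_notMem fun a ha =>
      hp ((hwin a ha).symm.trans ((hbit a ha).mp (by omega)).1)
    simp [this]

end WindowCliqueBound

theorem ForcesPotential.succ_of_descent {S : Tournament W} {n : ℕ} (hS : S.ForcesPotential n)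
    {T : Tournament V} {f : V → ℕ} (hf : Injective f) {w : ℕ → ℕ} (hw : Monotone w) {R : ℕ}
    (hR : ∀ x, w (f x) < R) {b : ℕ → ℕ} (hb : T.WindowCliqueBound f w b)
    {e : W → V} (he : Injective e) (harc : ∀ a c, S.arc a c → T.arc (e a) (e c)) {u u₀ u₁ : V}
    (hu : ∀ a, e a ≠ u) (hu₀ : w (f u₀) = w (f u)) (hu₁ : w (f u₁) = w (f u))
    (h₀ : ∀ a, w (f (e a)) = w (f u) → f (e a) < f u → (T.backedge f).Adj u₀ (e a))
    (h₁ : ∀ a, w (f (e a)) = w (f u) → f u < f (e a) → (T.backedge f).Adj u₁ (e a)) :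
    n + 1 ≤ 1 + windowPotential R b := by
  have hsplit := hS (f ∘ e) (hf.comp he) _ (splitWindow_monotone hw (f u)) (2 * R)
    (fun a => splitWindow_lt_two_mul _ (hR (e a))) _
    (hb.comp_splitWindow he harc (fun a h => hu a (hf h)) hu₀ hu₁ h₀ h₁)
  have := windowPotential_splitBound_lt (hR u) (hb.one_le u)
  omega

theorem ForcesPotential.le_cliqueNum [Finite V] {T : Tournament V} {n k : ℕ}
    (hT : T.ForcesPotential n) (hk : 2 ^ k ≤ n) : k ≤ T.cliqueNum := by
  obtain ⟨f₀, hf₀⟩ := Countable.exists_injective_nat V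
  refine le_csInf ⟨_, f₀, hf₀, rfl⟩ ?_
  rintro _ ⟨f, hf, rfl⟩
  have hn := hT f hf (fun _ => 0) monotone_const 1 (fun _ => Nat.one_pos)
    (fun _ => (T.backedge f).cliqueNum) fun _ _ _ hK => hK.card_le_cliqueNum
  simp only [windowPotential, sum_range_one] at hn
  have := Nat.one_le_two_pow (n := (T.backedge f).cliqueNum)
  exact (Nat.pow_le_pow_iff_right (le_refl 2)).mp (by omega)

end Tournament

instance DType.finite : (n : ℕ) → Finite (DType n)
  | 0 => inferInstanceAs (Finite Empty)
  | n + 1 => haveI := DType.finite n; inferInstanceAs (Finite (DType n ⊕ (DType n ⊕ Unit)))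

instance AType.finite : (n : ℕ) → Finite (AType n)
  | 0 => inferInstanceAs (Finite Empty)
  | n + 1 => haveI := AType.finite n; inferInstanceAs (Finite ((Fin n × AType n) ⊕ Fin (n + 1)))

open Tournament

theorem Dtour_forcesPotential : (n : ℕ) → (Dtour n).ForcesPotential n
  | 0 => forcesPotential_zero _
  | n + 1 => by
    intro f hf w hw R hR b hb
    let v : DType (n + 1) := Sum.inr (Sum.inr ())
    by_cases hX : ∃ a, w (f (Sum.inl a)) = w (f v) ∧ f v < f (Sum.inl a)
    · obtain ⟨a, hav, hva⟩ := hX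
      exact (Dtour_forcesPotential n).succ_of_descent hf hw hR hb
        (e := fun y => Sum.inr (Sum.inl y)) (Sum.inr_injective.comp Sum.inl_injective)
        (fun _ _ h => h) (u := v) (fun _ h => Sum.inl_ne_inr (Sum.inr_injective h)) hav rfl
        (fun _ _ hy => (backedge_adj_of_lt (hy.trans hva) trivial).symm)
        (fun _ _ hy => backedge_adj_of_lt hy trivial)
    · push Not at hX
      exact (Dtour_forcesPotential n).succ_of_descent hf hw hR hb (e := Sum.inl)
        Sum.inl_injective (fun _ _ h => h) (u := v) (fun _ => Sum.inl_ne_inr) rfl rfl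
        (fun _ _ hx => (backedge_adj_of_lt hx trivial).symm)
        (fun a hav hva => absurd hva (hX a hav).not_gt)

theorem Atour_forcesPotential : (n : ℕ) → (Atour n).ForcesPotential n
  | 0 => forcesPotential_zero _
  | n + 1 => by
    intro f hf w hw R hR b hb
    let v : Fin (n + 1) → AType (n + 1) := Sum.inr
    by_cases hdesc : ∃ k k', k < k' ∧ f (v k') < f (v k) ∧ w (f (v k')) = w (f (v k))
    · obtain ⟨k, k', hkk', hf', hw'⟩ := hdesc
      have hk : (k : ℕ) < n := by omega
      exact (Atour_forcesPotential n).succ_of_descent hf hw hR hb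
        (e := fun a => Sum.inl (⟨k, hk⟩, a))
        (fun _ _ h => (Prod.ext_iff.mp (Sum.inl_injective h)).2)
        (fun _ _ h => Or.inr ⟨rfl, h⟩) (u := v k) (fun _ => Sum.inl_ne_inr) rfl hw'
        (fun _ _ hx => (backedge_adj_of_lt hx (le_refl (k : ℕ))).symm)
        (fun _ _ hx => backedge_adj_of_lt (hf'.trans hx) hkk')
    · push Not at hdesc
      have hclique : ∀ k k', k < k' → w (f (v k)) = w (f (v k')) →
          ((Atour (n + 1)).backedge f).Adj (v k) (v k') := fun k k' hkk' hw' =>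
        backedge_adj_of_lt (lt_of_le_of_ne (not_lt.mp fun h => hdesc k k' hkk' h hw'.symm)
          fun h => (Fin.ne_of_lt hkk') (Sum.inr_injective (hf h))) hkk'
      have hcard := hb.card_le_windowPotential hR (s := univ.map ⟨v, Sum.inr_injective⟩) ?_
      · simp only [card_map, card_univ, Fintype.card_fin] at hcard
        omega
      simp only [mem_map, mem_univ, true_and]
      rintro _ ⟨k, rfl⟩ _ ⟨k', rfl⟩ hne hw'
      rcases lt_or_gt_of_ne (ne_of_apply_ne v hne) with hkk' | hkk'
      · exact hclique k k' hkk' hw'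
      · exact (hclique k' k hkk' hw'.symm).symm

open Tournament in
/-- Lemma 2: `ω⃗(A n) → ∞` and `ω⃗(D n) → ∞` as `n → ∞`. -/
theorem stmt_1 :
    ∀ k : ℕ, ∃ N : ℕ, ∀ n : ℕ, N ≤ n →
      k ≤ (Atour n).cliqueNum ∧ k ≤ (Dtour n).cliqueNum :=
  fun k => ⟨2 ^ k, fun n hn =>
    ⟨(Atour_forcesPotential n).le_cliqueNum hn, (Dtour_forcesPotential n).le_cliqueNum hn⟩⟩
end

section
/- Let r > 0 be an integer and let T be a tournament containing an r-mountain. Then ω⃗(T) ≥ ⌊log₂(r)⌋. -/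
/-!
Fix an injective ordering `f` and cut it at a finite set `Θ` of thresholds into cells. By
induction on `r`, for all `Θ` at once, an `r`-mountain `M` satisfies `r ≤ ∑ᵢ (2 ^ ωᵢ - 1)`, where
`ωᵢ` is the size of the largest backedge clique inside `M` and the `i`-th cell. Let `K` be the
`r`-clique defining `M`. If some arc `uv` of `K` goes forward inside one cell, take the
`(r-1)`-mountain `W ⊆ M` with `W ⇒ u` and `v ⇒ W`, and apply induction to `W` with the threshold
`f u` added: in the cell that gets split, `u` extends every backedge clique of `W` above `u` and
`v` every one below it, so `(2^a - 1) + (2^b - 1) < 2^(max a b + 1) - 1` pays for the extra `1`;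
every other cell meets `W` on one side of `u` only. Otherwise `K` meets each cell in a backedge
clique, and `k ≤ 2^k - 1`. Without thresholds this gives `r < 2 ^ ω`.
-/

theorem two_pow_sub_one_add_two_pow_sub_one_lt {a b c : ℕ} (ha : a < c) (hb : b < c) :
    (2 ^ a - 1) + (2 ^ b - 1) < 2 ^ c - 1 := by
  have ha' : 2 ^ (a + 1) ≤ 2 ^ c := Nat.pow_le_pow_right two_pos ha
  have hb' : 2 ^ (b + 1) ≤ 2 ^ c := Nat.pow_le_pow_right two_pos hb
  rw [pow_succ] at ha' hb'
  have := Nat.one_le_two_pow (n := a)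
  have := Nat.one_le_two_pow (n := b)
  omega

namespace SimpleGraph

variable {V : Type*} (G : SimpleGraph V)

noncomputable def cliqueNumWithin (X : Set V) : ℕ :=
  sSup {n | ∃ s : Finset V, (s : Set V) ⊆ X ∧ G.IsNClique n s}

variable {G} [Finite V]

theorem bddAbove_cliqueNumWithin (X : Set V) :
    BddAbove {n | ∃ s : Finset V, (s : Set V) ⊆ X ∧ G.IsNClique n s} :=
  (Set.finite_range (Finset.card : Finset V → ℕ)).bddAbove.mono
    (by rintro _ ⟨s, -, hs⟩; exact ⟨s, hs.card_eq⟩)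

theorem IsClique.card_le_cliqueNumWithin {X : Set V} {s : Finset V} (hsX : (s : Set V) ⊆ X)
    (hs : G.IsClique s) : s.card ≤ G.cliqueNumWithin X :=
  le_csSup (bddAbove_cliqueNumWithin X) ⟨s, hsX, hs, rfl⟩

theorem exists_isNClique_cliqueNumWithin (X : Set V) :
    ∃ s : Finset V, (s : Set V) ⊆ X ∧ G.IsNClique (G.cliqueNumWithin X) s :=
  Nat.sSup_mem (s := {n | ∃ s : Finset V, (s : Set V) ⊆ X ∧ G.IsNClique n s})
    ⟨0, ∅, by simp, by simp [isNClique_iff]⟩ (bddAbove_cliqueNumWithin X)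

theorem cliqueNumWithin_mono {X Y : Set V} (h : X ⊆ Y) :
    G.cliqueNumWithin X ≤ G.cliqueNumWithin Y := by
  obtain ⟨s, hsX, hs⟩ := G.exists_isNClique_cliqueNumWithin X
  exact hs.card_eq ▸ hs.isClique.card_le_cliqueNumWithin (hsX.trans h)

theorem cliqueNumWithin_empty : G.cliqueNumWithin ∅ = 0 := by
  obtain ⟨s, hs, hsn⟩ := G.exists_isNClique_cliqueNumWithin ∅
  rw [← hsn.card_eq, Finset.card_eq_zero, ← Finset.coe_eq_empty]
  exact Set.subset_empty_iff.mp hs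

theorem cliqueNumWithin_le_cliqueNum (X : Set V) : G.cliqueNumWithin X ≤ G.cliqueNum := by
  obtain ⟨s, -, hs⟩ := G.exists_isNClique_cliqueNumWithin X
  exact hs.card_eq ▸ hs.isClique.card_le_cliqueNum

theorem cliqueNumWithin_add_one_le {X Y : Set V} {v : V} (hXY : X ⊆ Y) (hv : v ∈ Y)
    (hadj : ∀ x ∈ X, G.Adj v x) : G.cliqueNumWithin X + 1 ≤ G.cliqueNumWithin Y := by
  classical
  obtain ⟨s, hsX, hs⟩ := G.exists_isNClique_cliqueNumWithin X
  have hvs : v ∉ s := fun h => G.irrefl (hadj v (hsX h))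
  rw [← hs.card_eq, ← Finset.card_insert_of_notMem hvs]
  refine IsClique.card_le_cliqueNumWithin ?_ ?_ <;> rw [Finset.coe_insert]
  · exact Set.insert_subset hv (hsX.trans hXY)
  · exact hs.isClique.insert fun x hx _ => hadj x (hsX hx)

theorem two_pow_cliqueNumWithin_sub_one_add_le {X₁ X₂ Y : Set V} (h₁ : X₁ ⊆ Y) (h₂ : X₂ ⊆ Y)
    (h : X₁ = ∅ ∨ X₂ = ∅) :
    (2 ^ G.cliqueNumWithin X₁ - 1) + (2 ^ G.cliqueNumWithin X₂ - 1) ≤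
      2 ^ G.cliqueNumWithin Y - 1 := by
  have hmono : ∀ X ⊆ Y, 2 ^ G.cliqueNumWithin X - 1 ≤ 2 ^ G.cliqueNumWithin Y - 1 := fun X hX =>
    Nat.sub_le_sub_right (Nat.pow_le_pow_right two_pos (cliqueNumWithin_mono hX)) 1
  rcases h with rfl | rfl <;>
    simp only [cliqueNumWithin_empty, pow_zero, Nat.sub_self, zero_add, add_zero]
  exacts [hmono X₂ h₂, hmono X₁ h₁]

theorem two_pow_cliqueNumWithin_sub_one_add_lt {X₁ X₂ Y : Set V} {v₁ v₂ : V} (h₁ : X₁ ⊆ Y)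
    (h₂ : X₂ ⊆ Y) (hv₁ : v₁ ∈ Y) (hv₂ : v₂ ∈ Y) (hadj₁ : ∀ x ∈ X₁, G.Adj v₁ x)
    (hadj₂ : ∀ x ∈ X₂, G.Adj v₂ x) :
    (2 ^ G.cliqueNumWithin X₁ - 1) + (2 ^ G.cliqueNumWithin X₂ - 1) <
      2 ^ G.cliqueNumWithin Y - 1 :=
  two_pow_sub_one_add_two_pow_sub_one_lt (cliqueNumWithin_add_one_le h₁ hv₁ hadj₁)
    (cliqueNumWithin_add_one_le h₂ hv₂ hadj₂)

end SimpleGraph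

section ThresholdCell

variable {V : Type} {f : V → ℕ} {Θ S : Finset ℕ} {t : ℕ} {x : V}

/-- `x` lies in the cell indexed by the set of thresholds below `f x`, so only `#Θ + 1` of the
cells are nonempty. -/
def thresholdCell (f : V → ℕ) (Θ S : Finset ℕ) : Set V :=
  {x | Θ.filter (· < f x) = S}

theorem mem_thresholdCell_of_le_of_le {y z : V} (hx : x ∈ thresholdCell f Θ S)
    (hy : y ∈ thresholdCell f Θ S) (hxz : f x ≤ f z) (hzy : f z ≤ f y) :
    z ∈ thresholdCell f Θ S :=
  le_antisymm (hy ▸ Finset.monotone_filter_right Θ fun _ _ h => h.trans_le hzy)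
    (hx ▸ Finset.monotone_filter_right Θ fun _ _ h => h.trans_le hxz)

theorem mem_thresholdCell_insert_iff (ht : t ∉ S) :
    x ∈ thresholdCell f (insert t Θ) S ↔ x ∈ thresholdCell f Θ S ∧ ¬ t < f x := by
  simp only [thresholdCell, Set.mem_ofPred_eq, Finset.filter_insert]
  split_ifs with h
  · simp only [h, not_true_eq_false, and_false, iff_false]
    rintro rfl
    exact ht (Finset.mem_insert_self _ _)
  · simp [h]

theorem mem_thresholdCell_insert_insert_iff (htΘ : t ∉ Θ) (htS : t ∉ S) :
    x ∈ thresholdCell f (insert t Θ) (insert t S) ↔ x ∈ thresholdCell f Θ S ∧ t < f x := by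
  simp only [thresholdCell, Set.mem_ofPred_eq, Finset.filter_insert]
  split_ifs with h
  · simp only [h, and_true]
    constructor
    · intro e
      have htF : t ∉ Θ.filter (· < f x) := fun hm => htΘ (Finset.mem_filter.mp hm).1
      simpa [Finset.erase_insert htS, Finset.erase_insert htF] using congrArg (Finset.erase · t) e
    · rintro rfl
      rfl
  · simp only [h, and_false, iff_false]
    intro e
    exact htΘ (Finset.mem_filter.mp (e ▸ Finset.mem_insert_self t S)).1

end ThresholdCell

namespace Tournament

variable {V : Type} {T : Tournament V} {f : V → ℕ}

theorem isClique_backedge (hf : Function.Injective f) {s : Set V}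
    (hs : ∀ x ∈ s, ∀ y ∈ s, T.arc x y → f y < f x) : (T.backedge f).IsClique s := by
  intro x hx y hy hxy
  rcases (hf.ne hxy).lt_or_gt with hlt | hlt
  · exact Or.inl ⟨hlt, (T.anti y x hxy.symm).mpr fun h => (hs x hx y hy h).not_gt hlt⟩
  · exact Or.inr ⟨hlt, (T.anti x y hxy).mpr fun h => (hs y hy x hx h).not_gt hlt⟩

variable (T f) in
noncomputable def cellWeight (Θ : Finset ℕ) (X : Set V) : ℕ :=
  ∑ S ∈ Θ.powerset, (2 ^ (T.backedge f).cliqueNumWithin (X ∩ thresholdCell f Θ S) - 1)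

variable [Finite V]

theorem card_le_cellWeight (hf : Function.Injective f) {K : Finset V} {M : Set V}
    (hKM : (K : Set V) ⊆ M) (Θ : Finset ℕ)
    (hK : ∀ x ∈ K, ∀ y ∈ K, T.arc x y → f x < f y →
      Θ.filter (· < f x) ≠ Θ.filter (· < f y)) :
    K.card ≤ T.cellWeight f Θ M := by
  classical
  calc K.card = ∑ S ∈ Θ.powerset, {x ∈ K | Θ.filter (· < f x) = S}.card :=
        Finset.card_eq_sum_card_fiberwise fun _ _ =>
          Finset.mem_powerset.mpr (Finset.filter_subset _ _)
    _ ≤ T.cellWeight f Θ M := by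
        refine Finset.sum_le_sum fun S _ => ?_
        set F := {x ∈ K | Θ.filter (· < f x) = S}
        have hsub : (F : Set V) ⊆ M ∩ thresholdCell f Θ S := fun x hx =>
          ⟨hKM (Finset.mem_filter.mp hx).1, (Finset.mem_filter.mp hx).2⟩
        have hclique : (T.backedge f).IsClique (F : Set V) := by
          refine isClique_backedge hf fun x hx y hy hxy => ?_
          rw [Finset.mem_coe, Finset.mem_filter] at hx hy
          refine lt_of_le_of_ne ?_ (hf.ne fun h => T.loopless x (h ▸ hxy))
          exact le_of_not_gt fun hlt => hK x hx.1 y hy.1 hxy hlt (hx.2.trans hy.2.symm)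
        have := hclique.card_le_cliqueNumWithin hsub
        have := Nat.lt_two_pow_self (n := (T.backedge f).cliqueNumWithin (M ∩ thresholdCell f Θ S))
        omega

theorem cellWeight_insert_add_one_le {M W : Set V} {u v : V} {Θ : Finset ℕ} (hWM : W ⊆ M)
    (hu : u ∈ M) (hv : v ∈ M) (hWu : ∀ w ∈ W, T.arc w u) (hvW : ∀ w ∈ W, T.arc v w)
    (huv : f u < f v) (hcell : Θ.filter (· < f u) = Θ.filter (· < f v)) :
    T.cellWeight f (insert (f u) Θ) W + 1 ≤ T.cellWeight f Θ M := by
  set D := Θ.filter (· < f u)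
  set ω := (T.backedge f).cliqueNumWithin
  have huD : u ∈ thresholdCell f Θ D := rfl
  have hvD : v ∈ thresholdCell f Θ D := hcell.symm
  have hfuΘ : f u ∉ Θ := fun h =>
    lt_irrefl _ (Finset.mem_filter.mp (hcell ▸ Finset.mem_filter.mpr ⟨h, huv⟩ : f u ∈ D)).2
  have hcells : ∀ S ∈ Θ.powerset,
      (2 ^ ω (W ∩ thresholdCell f (insert (f u) Θ) S) - 1)
        + (2 ^ ω (W ∩ thresholdCell f (insert (f u) Θ) (insert (f u) S)) - 1)
        + (if S = D then 1 else 0) ≤ 2 ^ ω (M ∩ thresholdCell f Θ S) - 1 := by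
    intro S hS
    have hfuS : f u ∉ S := fun h => hfuΘ (Finset.mem_powerset.mp hS h)
    have hlow : ∀ x ∈ W ∩ thresholdCell f (insert (f u) Θ) S,
        x ∈ M ∩ thresholdCell f Θ S ∧ ¬ f u < f x := fun x ⟨hxW, hx⟩ =>
      ((mem_thresholdCell_insert_iff hfuS).mp hx).imp_left (⟨hWM hxW, ·⟩)
    have hup : ∀ x ∈ W ∩ thresholdCell f (insert (f u) Θ) (insert (f u) S),
        x ∈ M ∩ thresholdCell f Θ S ∧ f u < f x := fun x ⟨hxW, hx⟩ =>
      ((mem_thresholdCell_insert_insert_iff hfuΘ hfuS).mp hx).imp_left (⟨hWM hxW, ·⟩)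
    split_ifs with hSD
    · subst hSD
      exact SimpleGraph.two_pow_cliqueNumWithin_sub_one_add_lt (fun x hx => (hlow x hx).1)
        (fun x hx => (hup x hx).1) (Set.mem_inter hv hvD) (Set.mem_inter hu huD)
        (fun x hx => Or.inr ⟨(not_lt.mp (hlow x hx).2).trans_lt huv, hvW x hx.1⟩)
        (fun x hx => Or.inl ⟨(hup x hx).2, hWu x hx.1⟩)
    · refine SimpleGraph.two_pow_cliqueNumWithin_sub_one_add_le (fun x hx => (hlow x hx).1)
        (fun x hx => (hup x hx).1) ?_
      by_contra! ⟨⟨x, hx⟩, ⟨y, hy⟩⟩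
      exact hSD (mem_thresholdCell_of_le_of_le (hlow x hx).1.2 (hup y hy).1.2
        (not_lt.mp (hlow x hx).2) (hup y hy).2.le).symm
  calc T.cellWeight f (insert (f u) Θ) W + 1
      = ∑ S ∈ Θ.powerset, ((2 ^ ω (W ∩ thresholdCell f (insert (f u) Θ) S) - 1)
          + (2 ^ ω (W ∩ thresholdCell f (insert (f u) Θ) (insert (f u) S)) - 1)
          + (if S = D then 1 else 0)) := by
        rw [cellWeight, Finset.sum_powerset_insert hfuΘ, Finset.sum_add_distrib,
          Finset.sum_add_distrib, Finset.sum_ite_eq',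
          if_pos (Finset.mem_powerset.mpr (Finset.filter_subset _ _))]
    _ ≤ T.cellWeight f Θ M := Finset.sum_le_sum hcells

theorem add_one_le_cellWeight_of_isMtn (hf : Function.Injective f) :
    ∀ (n : ℕ) (M : Set V), T.IsMtn (n + 1) M → ∀ Θ, n + 1 ≤ T.cellWeight f Θ M
  | 0, M, hM, Θ => by
    obtain ⟨v, rfl⟩ := hM
    simpa using card_le_cellWeight hf (K := {v}) (by simp) Θ fun x hx y hy hxy => by
      rw [Finset.mem_singleton] at hx hy
      subst hx hy
      exact absurd hxy (T.loopless _)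
  | n + 1, M, hM, Θ => by
    obtain ⟨⟨K, hKM, hKcard, hK⟩, -⟩ := hM
    lift K to Finset V using K.toFinite
    rw [Set.ncard_coe_finset] at hKcard
    by_cases hforward : ∃ u ∈ K, ∃ v ∈ K, T.arc u v ∧ f u < f v ∧
        Θ.filter (· < f u) = Θ.filter (· < f v)
    · obtain ⟨u, hu, v, hv, huv, hfuv, hcell⟩ := hforward
      obtain ⟨W, hWM, hW, hWu, hvW⟩ := hK u hu v hv huv
      have := add_one_le_cellWeight_of_isMtn hf n W hW (insert (f u) Θ)
      have := cellWeight_insert_add_one_le hWM (hKM hu) (hKM hv) hWu hvW hfuv hcell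
      omega
    · push Not at hforward
      exact hKcard ▸ card_le_cellWeight hf hKM Θ hforward

theorem log_lt_cliqueNum_backedge_of_isMtn (hf : Function.Injective f) {r : ℕ} {M : Set V}
    (hM : T.IsMtn r M) : Nat.log 2 r < (T.backedge f).cliqueNum := by
  obtain _ | n := r
  · exact hM.elim
  have hweight := add_one_le_cellWeight_of_isMtn hf n M hM ∅
  simp only [cellWeight, Finset.powerset_empty, Finset.sum_singleton, thresholdCell,
    Finset.filter_empty, Set.ofPred_true, Set.inter_univ] at hweight
  refine Nat.log_lt_of_lt_pow n.succ_ne_zero ?_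
  calc n + 1 < 2 ^ (T.backedge f).cliqueNumWithin M := by omega
    _ ≤ 2 ^ (T.backedge f).cliqueNum :=
      Nat.pow_le_pow_right two_pos (SimpleGraph.cliqueNumWithin_le_cliqueNum M)

end Tournament

open Tournament in
theorem stmt_8_general {V : Type} [Fintype V] (T : Tournament V) (r : ℕ)
    (M : Set V) (hM : T.IsMtn r M) :
    Nat.log 2 r ≤ T.cliqueNum := by
  have hfin : Function.Injective fun v => (Fintype.equivFin V v : ℕ) :=
    Fin.val_injective.comp (Fintype.equivFin V).injective
  refine le_csInf ⟨_, _, hfin, rfl⟩ ?_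
  rintro _ ⟨f, hf, rfl⟩
  exact (log_lt_cliqueNum_backedge_of_isMtn hf hM).le

open Tournament in
/-- Lemma (mountains force big clique number): if a tournament `T` contains an
`r`-mountain with `r > 0`, then `ω⃗(T) ≥ ⌊log₂ r⌋`. -/
theorem stmt_8 {V : Type} [Fintype V] (T : Tournament V) (r : ℕ) (hr : 0 < r)
    (M : Set V) (hM : T.IsMtn r M) :
    Nat.log 2 r ≤ T.cliqueNum :=
  stmt_8_general T r M hM
end

section
/- Let f : ℕ → ℕ be a nondecreasing function, let c ∈ ℕ, and let Q be a tournament. Then there exists a constant C, depending only on f, c, and |V(Q)|, such that for every tournament T one of the following holds: (a) ω⃗(T) < C; (b) T contains a copy of Q; or (c) there exist an integer x ≥ c and disjoint sets A, B ⊆ V(T) with ω⃗(A) = ω⃗(B) = f(x) such that either every vertex v ∈ A satisfies ω⃗(N^−(v) ∩ B) < x, or every vertex v ∈ A satisfies ω⃗(N^+(v) ∩ B) < x. -/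
/-!
Suppose outcome (c) fails. Then for `x ≥ c` and any bag `B` with `ω⃗(B) = f x`, the vertices
outside `B` whose in-neighbourhood (or out-neighbourhood) in `B` has clique number `< x` form a
set of clique number `< f x`: otherwise a subset of it of clique number exactly `f x` would be
the set `A` of outcome (c). Since `ω⃗` is subadditive, a set of large enough clique number
therefore contains a vertex `v` whose in- and out-neighbourhoods in each of `r` given bags have
clique number at least `x`. We embed `Q` vertex by vertex: its last vertex goes to such a `v`,
and the others are embedded, by induction, into the `2r` sets `N^-(v) ∩ B` and `N^+(v) ∩ B`,
with `x` chosen large enough for that smaller pattern.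
-/

open Function Finset

namespace SimpleGraph

variable {α β : Type*} {G : SimpleGraph α} {H : SimpleGraph β}

theorem cliqueNum_le_card [Fintype α] : G.cliqueNum ≤ Fintype.card α := by
  obtain ⟨s, hs⟩ := G.exists_isNClique_cliqueNum
  exact hs.card_eq ▸ s.card_le_univ

theorem Copy.cliqueNum_le [Finite β] (f : Copy G H) : G.cliqueNum ≤ H.cliqueNum := by
  obtain ⟨s, hs⟩ := G.exists_isNClique_cliqueNum
  rw [← hs.card_eq, ← s.card_map f.toEmbedding]
  refine IsClique.card_le_cliqueNum (tc := ?_)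
  rw [coe_map]
  exact (hs.isClique.map (f := f.toEmbedding)).mono ((map_le_iff_le_comap _ _ _).2 f.toHom.le_comap)

theorem IsClique.card_filter_le_cliqueNum_induce [Finite α] {t : Finset α} (ht : G.IsClique t)
    (s : Set α) [DecidablePred (· ∈ s)] : #{a ∈ t | a ∈ s} ≤ (G.induce s).cliqueNum := by
  rw [← card_subtype]
  refine IsClique.card_le_cliqueNum (tc := isClique_induce_iff.2 (ht.subset ?_))
  intro a
  simp +contextual

end SimpleGraph

namespace Tournament

section

variable {α β : Type}

theorem exists_backedge_cliqueNum_eq [Countable α] (T : Tournament α) :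
    ∃ g : α → ℕ, Injective g ∧ (T.backedge g).cliqueNum = T.cliqueNum := by
  obtain ⟨g, hg⟩ := Countable.exists_injective_nat α
  exact Nat.sInf_mem (s := {n | ∃ g : α → ℕ, Injective g ∧ (T.backedge g).cliqueNum = n})
    ⟨_, g, hg, rfl⟩

theorem cliqueNum_le_backedge (T : Tournament α) {g : α → ℕ} (hg : Injective g) :
    T.cliqueNum ≤ (T.backedge g).cliqueNum :=
  Nat.sInf_le ⟨g, hg, rfl⟩

theorem backedge_congr (T : Tournament α) {g g' : α → ℕ} (h : ∀ a b, g a < g b ↔ g' a < g' b) :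
    T.backedge g = T.backedge g' := by
  ext a b
  simp only [backedge, h]

theorem backedge_restrict (T : Tournament α) (g : α → ℕ) (S : Set α) :
    (T.restrict S).backedge (g ∘ Subtype.val) = (T.backedge g).induce S :=
  rfl

theorem cliqueNum_le_card [Finite α] (T : Tournament α) : T.cliqueNum ≤ Nat.card α := by
  have := Fintype.ofFinite α
  obtain ⟨g, -, hgT⟩ := T.exists_backedge_cliqueNum_eq
  rw [Nat.card_eq_fintype_card, ← hgT]
  exact SimpleGraph.cliqueNum_le_card

theorem cliqueNum_le_of_injective [Finite β] {T : Tournament α} {T' : Tournament β} (e : α → β)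
    (he : Injective e) (harc : ∀ a b, T.arc a b → T'.arc (e a) (e b)) :
    T.cliqueNum ≤ T'.cliqueNum := by
  obtain ⟨g, hg, hgT'⟩ := T'.exists_backedge_cliqueNum_eq
  let copy : SimpleGraph.Copy (T.backedge (g ∘ e)) (T'.backedge g) :=
    ⟨⟨e, fun {a b} hab => hab.imp (And.imp_right (harc b a)) (And.imp_right (harc a b))⟩, he⟩
  exact (T.cliqueNum_le_backedge (hg.comp he)).trans (hgT' ▸ copy.cliqueNum_le)

theorem cliqueNum_le_add [Finite α] (T : Tournament α) (S : Set α) :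
    T.cliqueNum ≤ (T.restrict S).cliqueNum + (T.restrict Sᶜ).cliqueNum := by
  classical
  obtain ⟨g₁, hg₁, hg₁T⟩ := (T.restrict S).exists_backedge_cliqueNum_eq
  obtain ⟨g₂, hg₂, hg₂T⟩ := (T.restrict Sᶜ).exists_backedge_cliqueNum_eq
  let g : α → ℕ := fun a => if h : a ∈ S then 2 * g₁ ⟨a, h⟩ else 2 * g₂ ⟨a, h⟩ + 1
  have hg : Injective g := by
    intro a b hab
    by_cases ha : a ∈ S <;> by_cases hb : b ∈ S <;>
      simp only [g, ha, hb, dite_true, dite_false] at hab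
    · exact congrArg Subtype.val (hg₁ (show g₁ ⟨a, ha⟩ = g₁ ⟨b, hb⟩ by omega))
    · omega
    · omega
    · exact congrArg Subtype.val (hg₂ (show g₂ ⟨a, ha⟩ = g₂ ⟨b, hb⟩ by omega))
  have hS : (T.backedge g).induce S = (T.restrict S).backedge g₁ := by
    rw [← backedge_restrict]
    refine backedge_congr _ fun a b => ?_
    simp only [comp_apply, g, a.2, b.2, dite_true, Subtype.coe_eta]
    omega
  have hSc : (T.backedge g).induce Sᶜ = (T.restrict Sᶜ).backedge g₂ := by
    rw [← backedge_restrict]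
    refine backedge_congr _ fun a b => ?_
    simp only [comp_apply, g, show a.1 ∉ S from a.2, show b.1 ∉ S from b.2, dite_false,
      Subtype.coe_eta]
    omega
  obtain ⟨t, ht⟩ := (T.backedge g).exists_isNClique_cliqueNum
  calc T.cliqueNum ≤ (T.backedge g).cliqueNum := T.cliqueNum_le_backedge hg
    _ = #{a ∈ t | a ∈ S} + #{a ∈ t | a ∈ Sᶜ} := by
      rw [← ht.card_eq, ← card_filter_add_card_filter_not (· ∈ S)]
      rfl
    _ ≤ (T.restrict S).cliqueNum + (T.restrict Sᶜ).cliqueNum := by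
      rw [← hg₁T, ← hg₂T, ← hS, ← hSc]
      exact add_le_add (ht.isClique.card_filter_le_cliqueNum_induce S)
        (ht.isClique.card_filter_le_cliqueNum_induce Sᶜ)

end

section

variable {V W : Type}

theorem arc_or_arc (T : Tournament V) {a b : V} (h : a ≠ b) : T.arc a b ∨ T.arc b a := by
  by_contra! h'
  exact h'.1 ((T.anti a b h).2 h'.2)

theorem injective_of_arc {P : Tournament W} {T : Tournament V} {φ : W → V}
    (hφ : ∀ a b, P.arc a b → T.arc (φ a) (φ b)) : Injective φ := by
  intro a b hab
  by_contra hne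
  rcases (P.arc_or_arc hne).imp (hφ a b) (hφ b a) with h | h <;>
    exact T.loopless _ (by rwa [hab] at h)

theorem hasCopy_of_arc {P : Tournament W} {T : Tournament V} {φ : W → V}
    (hφ : ∀ a b, P.arc a b → T.arc (φ a) (φ b)) : T.HasCopy P := by
  refine ⟨φ, injective_of_arc hφ, fun a b => ⟨hφ a b, fun h => ?_⟩⟩
  have hne : a ≠ b := by rintro rfl; exact T.loopless _ h
  exact (P.anti a b hne).2 fun hba =>
    (T.anti _ _ ((injective_of_arc hφ).ne hne)).1 h (hφ b a hba)

theorem arc_dite [DecidableEq W] {T : Tournament V} {P : Tournament W} {w : W} {v : V}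
    {φ : ↥{a | a ≠ w} → V} (hφ : ∀ a b, (P.restrict {a | a ≠ w}).arc a b → T.arc (φ a) (φ b))
    (hin : ∀ a : ↥{a | a ≠ w}, P.arc a w → T.arc (φ a) v)
    (hout : ∀ a : ↥{a | a ≠ w}, P.arc w a → T.arc v (φ a)) (a b : W) (hab : P.arc a b) :
    T.arc (if h : a = w then v else φ ⟨a, h⟩) (if h : b = w then v else φ ⟨b, h⟩) := by
  by_cases ha : a = w <;> by_cases hb : b = w <;> simp only [ha, hb, dite_true, dite_false]
  · subst ha hb
    exact absurd hab (P.loopless _)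
  · subst ha
    exact hout ⟨b, hb⟩ hab
  · subst hb
    exact hin ⟨a, ha⟩ hab
  · exact hφ ⟨a, ha⟩ ⟨b, hb⟩ hab

end

section

variable {V : Type} [Finite V] (T : Tournament V)

theorem cliqueNumOn_le_ncard (X : Set V) : T.cliqueNumOn X ≤ X.ncard :=
  (T.restrict X).cliqueNum_le_card.trans_eq (Nat.card_coe_set_eq X)

@[simp]
theorem cliqueNumOn_empty : T.cliqueNumOn ∅ = 0 := by
  simpa using T.cliqueNumOn_le_ncard ∅

theorem cliqueNumOn_mono {X Y : Set V} (h : X ⊆ Y) : T.cliqueNumOn X ≤ T.cliqueNumOn Y :=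
  cliqueNum_le_of_injective (Set.inclusion h) (Set.inclusion_injective h) fun _ _ => id

theorem cliqueNumOn_univ : T.cliqueNumOn Set.univ = T.cliqueNum :=
  le_antisymm (cliqueNum_le_of_injective Subtype.val Subtype.val_injective fun _ _ => id)
    (cliqueNum_le_of_injective (fun v => ⟨v, trivial⟩) (fun _ _ h => congrArg Subtype.val h)
      fun _ _ => id)

theorem cliqueNumOn_union_le (X Y : Set V) :
    T.cliqueNumOn (X ∪ Y) ≤ T.cliqueNumOn X + T.cliqueNumOn Y := by
  refine ((T.restrict (X ∪ Y)).cliqueNum_le_add {u | u.1 ∈ X}).trans (add_le_add ?_ ?_)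
  · exact cliqueNum_le_of_injective (fun u => ⟨u.1.1, u.2⟩)
      (fun _ _ h => Subtype.ext (Subtype.ext (congrArg Subtype.val h :))) fun _ _ => id
  · exact cliqueNum_le_of_injective (fun u => ⟨u.1.1, u.1.2.resolve_left u.2⟩)
      (fun _ _ h => Subtype.ext (Subtype.ext (congrArg Subtype.val h :))) fun _ _ => id

theorem cliqueNumOn_insert_le (v : V) (X : Set V) :
    T.cliqueNumOn (insert v X) ≤ T.cliqueNumOn X + 1 := by
  rw [Set.insert_eq, add_comm]
  exact (T.cliqueNumOn_union_le {v} X).trans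
    (add_le_add_left ((T.cliqueNumOn_le_ncard {v}).trans_eq (Set.ncard_singleton v)) _)

theorem cliqueNumOn_biUnion_le {ι : Type} (s : Finset ι) (F : ι → Set V) :
    T.cliqueNumOn (⋃ i ∈ s, F i) ≤ ∑ i ∈ s, T.cliqueNumOn (F i) := by
  classical
  induction s using Finset.induction_on with
  | empty => simp
  | insert a s ha ih =>
    rw [Finset.set_biUnion_insert, Finset.sum_insert ha]
    exact (T.cliqueNumOn_union_le _ _).trans (add_le_add_right ih _)

/-- Deleting a vertex lowers `ω⃗` by at most one. -/
theorem exists_subset_cliqueNumOn_eq {X : Set V} {k : ℕ} (hk : k ≤ T.cliqueNumOn X) :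
    ∃ A ⊆ X, T.cliqueNumOn A = k := by
  induction X, X.toFinite using Set.Finite.induction_on generalizing k with
  | empty => exact ⟨∅, subset_rfl, by simp_all⟩
  | @insert v X _ _ ih =>
    by_cases hkX : k ≤ T.cliqueNumOn X
    · obtain ⟨A, hAX, hA⟩ := ih hkX
      exact ⟨A, hAX.trans (Set.subset_insert v X), hA⟩
    · exact ⟨insert v X, subset_rfl, by have := T.cliqueNumOn_insert_le v X; omega⟩

end

def HasHalfBagChain {V : Type} (T : Tournament V) (f : ℕ → ℕ) (c : ℕ) : Prop :=
  ∃ x : ℕ, c ≤ x ∧ ∃ A B : Set V, Disjoint A B ∧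
    T.cliqueNumOn A = f x ∧ T.cliqueNumOn B = f x ∧
    ((∀ v ∈ A, T.cliqueNumOn (T.inN v ∩ B) < x) ∨
     (∀ v ∈ A, T.cliqueNumOn (T.outN v ∩ B) < x))

/-- Enough clique number to embed a `j`-vertex pattern with its vertices in `r` prescribed sets;
`3 * r * f x` bounds the bags of clique number `f x` together with their light vertices. -/
def halfBagChainBound (f : ℕ → ℕ) (c : ℕ) : ℕ → ℕ → ℕ
  | 0, _ => 0
  | j + 1, r => (3 * r + 1) * f (max c (halfBagChainBound f c j (2 * r))) + 1

section

variable {V : Type} [Finite V] {T : Tournament V} {f : ℕ → ℕ} {c : ℕ}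

theorem cliqueNumOn_lt_of_light (hT : ¬ T.HasHalfBagChain f c) {x : ℕ} (hx : c ≤ x)
    {B L : Set V} (hB : T.cliqueNumOn B = f x) (hLB : Disjoint L B)
    (hL : (∀ v ∈ L, T.cliqueNumOn (T.inN v ∩ B) < x) ∨
      (∀ v ∈ L, T.cliqueNumOn (T.outN v ∩ B) < x)) :
    T.cliqueNumOn L < f x := by
  by_contra! h
  obtain ⟨A, hAL, hA⟩ := T.exists_subset_cliqueNumOn_eq h
  exact hT ⟨x, hx, A, B, hLB.mono_left hAL, hA, hB,
    hL.imp (fun hin v hv => hin v (hAL hv)) (fun hout v hv => hout v (hAL hv))⟩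

theorem exists_heavy_vertex (hT : ¬ T.HasHalfBagChain f c) {ι : Type} [Fintype ι] {x : ℕ}
    (hx : c ≤ x) {B : ι → Set V} (hB : ∀ l, T.cliqueNumOn (B l) = f x) {S : Set V}
    (hS : 3 * Fintype.card ι * f x < T.cliqueNumOn S) :
    ∃ v ∈ S, ∀ l, x ≤ T.cliqueNumOn (T.inN v ∩ B l) ∧ x ≤ T.cliqueNumOn (T.outN v ∩ B l) := by
  let Lin l := {u | u ∉ B l ∧ T.cliqueNumOn (T.inN u ∩ B l) < x}
  let Lout l := {u | u ∉ B l ∧ T.cliqueNumOn (T.outN u ∩ B l) < x}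
  let Z := ⋃ l ∈ Finset.univ, (B l ∪ Lin l ∪ Lout l)
  have hL : ∀ l, T.cliqueNumOn (B l ∪ Lin l ∪ Lout l) ≤ 3 * f x := by
    intro l
    have hin : T.cliqueNumOn (Lin l) < f x := cliqueNumOn_lt_of_light hT hx (hB l)
      (Set.disjoint_left.2 fun _ hu => hu.1) (Or.inl fun _ hu => hu.2)
    have hout : T.cliqueNumOn (Lout l) < f x := cliqueNumOn_lt_of_light hT hx (hB l)
      (Set.disjoint_left.2 fun _ hu => hu.1) (Or.inr fun _ hu => hu.2)
    have := T.cliqueNumOn_union_le (B l ∪ Lin l) (Lout l)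
    have := T.cliqueNumOn_union_le (B l) (Lin l)
    have := hB l
    omega
  have hZ : T.cliqueNumOn Z ≤ 3 * Fintype.card ι * f x := by
    refine (T.cliqueNumOn_biUnion_le _ _).trans ?_
    calc ∑ l, T.cliqueNumOn (B l ∪ Lin l ∪ Lout l) ≤ ∑ _l : ι, 3 * f x :=
          Finset.sum_le_sum fun l _ => hL l
      _ = 3 * Fintype.card ι * f x := by
        rw [Finset.sum_const, Finset.card_univ, smul_eq_mul]
        ring
  obtain ⟨v, hvS, hvZ⟩ : (S \ Z).Nonempty := by
    rw [Set.nonempty_iff_ne_empty]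
    intro h
    have := T.cliqueNumOn_mono (Set.subset_sdiff_union S Z)
    have := T.cliqueNumOn_union_le (S \ Z) Z
    rw [h, cliqueNumOn_empty] at *
    omega
  simp only [Z, Lin, Lout, Set.mem_iUnion, Finset.mem_univ, Set.mem_union, Set.mem_ofPred_eq,
    not_exists, not_or, not_and, not_lt, forall_const] at hvZ
  exact ⟨v, hvS, fun l => ⟨(hvZ l).1.2 (hvZ l).1.1, (hvZ l).2 (hvZ l).1.1⟩⟩

theorem exists_arc_map_of_not_hasHalfBagChain (hT : ¬ T.HasHalfBagChain f c) (j : ℕ) :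
    ∀ {W : Type} [Fintype W] (P : Tournament W), Fintype.card W = j →
    ∀ {ι : Type} [Fintype ι] (S : ι → Set V) (σ : W → ι),
      (∀ l, halfBagChainBound f c j (Fintype.card ι) ≤ T.cliqueNumOn (S l)) →
      ∃ φ : W → V, (∀ a, φ a ∈ S (σ a)) ∧ ∀ a b, P.arc a b → T.arc (φ a) (φ b) := by
  induction j with
  | zero =>
    intro W _ P hW ι _ S σ _
    have := Fintype.card_eq_zero_iff.1 hW
    exact ⟨isEmptyElim, isEmptyElim, isEmptyElim⟩
  | succ j ih =>
    intro W _ P hW ι _ S σ hS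
    classical
    obtain ⟨w⟩ : Nonempty W := Fintype.card_pos_iff.1 (by omega)
    set r := Fintype.card ι
    set x := max c (halfBagChainBound f c j (2 * r))
    have hSx : ∀ l, (3 * r + 1) * f x + 1 ≤ T.cliqueNumOn (S l) := hS
    choose B hBS hB using fun l => T.exists_subset_cliqueNumOn_eq (k := f x) (by
      have := hSx l
      nlinarith)
    obtain ⟨v, hvS, hv⟩ := exists_heavy_vertex hT (le_max_left _ _) hB (S := S (σ w)) (by
      have := hSx (σ w)
      nlinarith)
    let S' : ι ⊕ ι → Set V := Sum.elim (fun l => T.inN v ∩ B l) (fun l => T.outN v ∩ B l)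
    let σ' : ↥{a | a ≠ w} → ι ⊕ ι := fun a => if P.arc a w then .inl (σ a) else .inr (σ a)
    have hS' : ∀ p, halfBagChainBound f c j (Fintype.card (ι ⊕ ι)) ≤ T.cliqueNumOn (S' p) := by
      rw [Fintype.card_sum, ← two_mul]
      rintro (l | l)
      · exact (le_max_right _ _).trans (hv l).1
      · exact (le_max_right _ _).trans (hv l).2
    obtain ⟨φ, hφS, hφP⟩ :=
      ih (P.restrict {a | a ≠ w}) (by rw [Set.card_ne_eq, hW]; rfl) S' σ' hS'
    have hside : ∀ a : ↥{a | a ≠ w}, φ a ∈ (if P.arc a w then T.inN v else T.outN v) ∩ B (σ a) := by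
      intro a
      have := hφS a
      by_cases h : P.arc a w <;> simpa [σ', S', h] using this
    refine ⟨fun a => if h : a = w then v else φ ⟨a, h⟩, fun a => ?_, arc_dite hφP ?_ ?_⟩
    · by_cases h : a = w
      · subst h
        simpa using hvS
      · simpa [h] using hBS _ (hside ⟨a, h⟩).2
    · intro a haw
      simpa [haw, inN] using (hside a).1
    · intro a hwa
      have haw : ¬ P.arc a w := (P.anti w a (Ne.symm a.2)).1 hwa
      simpa [haw, outN] using (hside a).1

end

end Tournament

open Tournament in
theorem stmt_11_general (f : ℕ → ℕ) (c m : ℕ) :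
    ∃ C : ℕ, ∀ (W : Type) [Fintype W] (Q : Tournament W), Fintype.card W = m →
      ∀ (V : Type) [Fintype V] (T : Tournament V),
        T.cliqueNum < C ∨ T.HasCopy Q ∨
        ∃ x : ℕ, c ≤ x ∧ ∃ A B : Set V, Disjoint A B ∧
          T.cliqueNumOn A = f x ∧ T.cliqueNumOn B = f x ∧
          ((∀ v ∈ A, T.cliqueNumOn (T.inN v ∩ B) < x) ∨
           (∀ v ∈ A, T.cliqueNumOn (T.outN v ∩ B) < x)) := by
  refine ⟨halfBagChainBound f c m 1, fun W _ Q hW V _ T => ?_⟩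
  by_cases hC : T.cliqueNum < halfBagChainBound f c m 1
  · exact Or.inl hC
  by_cases hT : T.HasHalfBagChain f c
  · exact Or.inr (Or.inr hT)
  obtain ⟨φ, -, hφ⟩ := exists_arc_map_of_not_hasHalfBagChain hT m Q hW
    (fun _ : Unit => Set.univ) (fun _ => ()) fun _ => by
      rw [cliqueNumOn_univ, Fintype.card_unit]
      exact not_lt.1 hC
  exact Or.inr (Or.inl (hasCopy_of_arc hφ))

open Tournament in
/-- Lemma (finding a half-bag-chain): for a nondecreasing `f`, `c ∈ ℕ`, and a bound
`m` on `|V(Q)|`, there is a constant `C` (depending only on `f`, `c` and `m`) such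
that every tournament either has clique number less than `C`, contains a copy of `Q`,
or contains the two sets described in outcome (c). -/
theorem stmt_11 (f : ℕ → ℕ) (hf : Monotone f) (c m : ℕ) :
    ∃ C : ℕ, ∀ (W : Type) [Fintype W] (Q : Tournament W), Fintype.card W = m →
      ∀ (V : Type) [Fintype V] (T : Tournament V),
        T.cliqueNum < C ∨ T.HasCopy Q ∨
        ∃ x : ℕ, c ≤ x ∧ ∃ A B : Set V, Disjoint A B ∧
          T.cliqueNumOn A = f x ∧ T.cliqueNumOn B = f x ∧
          ((∀ v ∈ A, T.cliqueNumOn (T.inN v ∩ B) < x) ∨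
           (∀ v ∈ A, T.cliqueNumOn (T.outN v ∩ B) < x)) :=
  stmt_11_general f c m
end

section
/- For every n ∈ ℕ, the tournament D_n is A_3-free; that is, no subset of the vertices of D_n induces a subtournament isomorphic to A_3. -/
/-!
`D (n+1) = Δ(X, Y, v)` is coloured by `ℤ/3` via `X ↦ 0`, `Y ↦ 1`, `v ↦ 2`, and every arc between
different colour classes goes from class `i` to class `i + 1`; any copy of a tournament `H` in
`D (n+1)` inherits such a colouring. Every copy of `A 3` contains the five-vertex subtournament
`Htour`, whose only such colourings are constant (a finite check). Hence a copy of `Htour` in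
`D (n+1)` lies inside `X` or `Y`, i.e. in a copy of `D n`, and induction on `n` ends in the
empty tournament `D 0`.
-/

namespace Tournament

variable {U V W : Type}

theorem HasCopy.trans {T : Tournament U} {H : Tournament V} {K : Tournament W}
    (hTH : T.HasCopy H) (hHK : H.HasCopy K) : T.HasCopy K := by
  obtain ⟨f, hf, hfarc⟩ := hTH
  obtain ⟨g, hg, hgarc⟩ := hHK
  exact ⟨f ∘ g, hf.comp hg, fun u v => (hgarc u v).trans (hfarc (g u) (g v))⟩

theorem HasCopy.of_forall_mem_range {T : Tournament U} {T' : Tournament V} {H : Tournament W}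
    {e : V → U} (he : ∀ a b, T'.arc a b ↔ T.arc (e a) (e b)) {f : W → U}
    (hf : Function.Injective f) (hfarc : ∀ u v, H.arc u v ↔ T.arc (f u) (f v))
    (hrange : ∀ u, f u ∈ Set.range e) : T'.HasCopy H := by
  choose g hg using hrange
  have hfg : e ∘ g = f := funext hg
  refine ⟨g, .of_comp (f := e) (hfg ▸ hf), fun u v => ?_⟩
  rw [he, hg, hg]
  exact hfarc u v

def IsCyclicColouring (T : Tournament V) (c : V → Fin 3) : Prop :=
  ∀ u v, c u ≠ c v → (T.arc u v ↔ c v = c u + 1)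

theorem IsCyclicColouring.comp {T : Tournament U} {H : Tournament W} {c : U → Fin 3}
    (hc : T.IsCyclicColouring c) {f : W → U} (hfarc : ∀ u v, H.arc u v ↔ T.arc (f u) (f v)) :
    H.IsCyclicColouring (c ∘ f) :=
  fun u v huv => (hfarc u v).trans (hc (f u) (f v) huv)

end Tournament

def Dpart {n : ℕ} : DType (n + 1) → Fin 3
  | Sum.inl _ => 0
  | Sum.inr (Sum.inl _) => 1
  | Sum.inr (Sum.inr _) => 2

theorem Dpart_eq_zero_iff {n : ℕ} {x : DType (n + 1)} : Dpart x = 0 ↔ x ∈ Set.range Sum.inl := by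
  rcases x with a | a | ⟨⟨⟩⟩
  · exact iff_of_true rfl ⟨a, rfl⟩
  · exact iff_of_false (by simp [Dpart]) (by rintro ⟨b, ⟨⟩⟩)
  · exact iff_of_false (by simp [Dpart]) (by rintro ⟨b, ⟨⟩⟩)

theorem Dpart_eq_one_iff {n : ℕ} {x : DType (n + 1)} :
    Dpart x = 1 ↔ x ∈ Set.range (Sum.inr ∘ Sum.inl) := by
  rcases x with a | a | ⟨⟨⟩⟩
  · exact iff_of_false (by simp [Dpart]) (by rintro ⟨b, ⟨⟩⟩)
  · exact iff_of_true rfl ⟨a, rfl⟩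
  · exact iff_of_false (by simp [Dpart]) (by rintro ⟨b, ⟨⟩⟩)

theorem Dpart_eq_two_iff {n : ℕ} {x : DType (n + 1)} : Dpart x = 2 ↔ x = Sum.inr (Sum.inr ()) := by
  rcases x with a | a | ⟨⟨⟩⟩
  · exact iff_of_false (by simp [Dpart]) (by rintro ⟨⟩)
  · exact iff_of_false (by simp [Dpart]) (by rintro ⟨⟩)
  · exact iff_of_true rfl rfl

theorem isCyclicColouring_Dpart (n : ℕ) : (Dtour (n + 1)).IsCyclicColouring Dpart := by
  rintro (a | a | ⟨⟩) (b | b | ⟨⟩) h <;> first | exact absurd rfl h | simp [Dtour, Darc, Dpart]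

theorem not_hasCopy_Dtour_of_isCyclicColouring {W : Type} {H : Tournament W} {a b : W}
    (hab : a ≠ b) (hH : ∀ c, H.IsCyclicColouring c → ∀ u v, c u = c v) :
    ∀ n, ¬ (Dtour n).HasCopy H
  | 0 => fun ⟨f, _, _⟩ => (f a).elim
  | n + 1 => by
    rintro ⟨f, hf, hfarc⟩
    have hpart (u : W) : Dpart (f u) = Dpart (f a) :=
      hH _ ((isCyclicColouring_Dpart n).comp hfarc) u a
    have ih := not_hasCopy_Dtour_of_isCyclicColouring hab hH n
    rcases hfa : Dpart (f a) with ⟨_ | _ | _ | _, hlt⟩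
    · exact ih (.of_forall_mem_range (e := Sum.inl) (fun _ _ => Iff.rfl) hf hfarc
        fun u => Dpart_eq_zero_iff.mp ((hpart u).trans hfa))
    · exact ih (.of_forall_mem_range (e := Sum.inr ∘ Sum.inl) (fun _ _ => Iff.rfl) hf hfarc
        fun u => Dpart_eq_one_iff.mp ((hpart u).trans hfa))
    · have hv (u : W) : f u = Sum.inr (Sum.inr ()) := Dpart_eq_two_iff.mp ((hpart u).trans hfa)
      exact hab (hf ((hv a).trans (hv b).symm))
    · omega

/-- The subtournament of `A 3` on `x ∈ T_1`, `y ∈ T_2` (each the vertex `v_1` of its copy of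
`A 2`) and the three vertices `v_1, v_2, v_3`, listed in this order. -/
def Htour : Tournament (Fin 5) where
  arc p q := ![![false, true, false, true, true],
    ![false, false, false, false, true],
    ![true, true, false, false, false],
    ![false, true, true, false, false],
    ![false, false, true, true, false]] p q = true
  loopless := by decide
  anti := by decide

instance : DecidableRel Htour.arc := fun _ _ => inferInstanceAs (Decidable (_ = true))

set_option maxRecDepth 10000 in
theorem Htour_isCyclicColouring_const :
    ∀ c, Htour.IsCyclicColouring c → ∀ u v, c u = c v := by
  unfold Tournament.IsCyclicColouring
  decide

instance instDecidableEqAType : (n : ℕ) → DecidableEq (AType n)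
  | 0 => inferInstanceAs (DecidableEq Empty)
  | n + 1 =>
    have := instDecidableEqAType n
    inferInstanceAs (DecidableEq ((Fin n × AType n) ⊕ Fin (n + 1)))

instance instDecidableAarc : (n : ℕ) → (x y : AType n) → Decidable (Aarc n x y)
  | 0, x, _ => x.elim
  | n + 1, Sum.inl (i, a), Sum.inl (j, b) =>
    have := instDecidableAarc n a b
    inferInstanceAs (Decidable ((i : ℕ) < (j : ℕ) ∨ (i = j ∧ Aarc n a b)))
  | _ + 1, Sum.inl (j, _), Sum.inr i => inferInstanceAs (Decidable ((j : ℕ) < (i : ℕ)))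
  | _ + 1, Sum.inr i, Sum.inl (j, _) => inferInstanceAs (Decidable ((i : ℕ) ≤ (j : ℕ)))
  | _ + 1, Sum.inr i, Sum.inr j => inferInstanceAs (Decidable ((j : ℕ) < (i : ℕ)))

theorem Atour_three_hasCopy_Htour : (Atour 3).HasCopy Htour :=
  ⟨![.inl (0, .inr 0), .inl (1, .inr 0), .inr 0, .inr 1, .inr 2], by decide, by
    simp only [Atour]; decide⟩

open Tournament in
/-- For every `n`, the tournament `D n` contains no copy of `A 3`. -/
theorem stmt_18 (n : ℕ) : ¬ (Dtour n).HasCopy (Atour 3) := fun h =>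
  not_hasCopy_Dtour_of_isCyclicColouring (a := 0) (b := 1) (by decide)
    Htour_isCyclicColouring_const n (h.trans Atour_three_hasCopy_Htour)
end
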